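/- For every SID Δ and nullary predicate A, every canonical Δ-model S ∈ C[[A]]_Δ satisfies tw(S) ≤ maxvar(Δ) − 1. -/

import Mathlib

/-!
Common definitions for the formalization of
"The Treewidth Boundedness Problem for an Inductive Separation Logic of Relations".
-/

namespace SLRTW

/-! ### Relational structures over a fixed universe `V` -/

/-- A structure over the relational signature given by `Rel`, `ar` with universe `V`:
each relation symbol is interpreted as a finite set of tuples, and only finitely many
relation symbols have a nonempty interpretation. -/
structure Str (Rel : Type) (ar : Rel → ℕ) (V : Type) where
  interp : ∀ r : Rel, Set (Fin (ar r) → V)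
  finite_interp : ∀ r, (interp r).Finite
  finite_active : {r : Rel | interp r ≠ ∅}.Finite

/-- Formulas of the separation logic of relations, over relation symbols `Rel` (with
arities `ar`) and predicate symbols `Pr` (with arities `pa`).  Variables are natural
numbers; by convention, the parameters of a predicate of arity `n` are `0, …, n-1`. -/
inductive SLR (Rel : Type) (ar : Rel → ℕ) (Pr : Type) (pa : Pr → ℕ) : Type where
  | emp : SLR Rel ar Pr pa
  | eq (x y : ℕ) : SLR Rel ar Pr pa
  | ne (x y : ℕ) : SLR Rel ar Pr pa
  | rel (r : Rel) (a : Fin (ar r) → ℕ) : SLR Rel ar Pr pa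
  | pred (A : Pr) (a : Fin (pa A) → ℕ) : SLR Rel ar Pr pa
  | star (φ ψ : SLR Rel ar Pr pa) : SLR Rel ar Pr pa
  | ex (x : ℕ) (φ : SLR Rel ar Pr pa) : SLR Rel ar Pr pa

/-- An RGB color scheme: a partition of the set of colors `𝒫(Rel)` into red, green
and blue colors, such that any two blue colors intersect, every green color intersects
every blue color, and every red color is disjoint from some blue color. -/
structure RGB (Rel : Type) where
  red : Set (Set Rel)
  green : Set (Set Rel)
  blue : Set (Set Rel)
  cover : ∀ C : Set Rel, C ∈ red ∨ C ∈ green ∨ C ∈ blue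
  red_green : red ∩ green = ∅
  red_blue : red ∩ blue = ∅
  green_blue : green ∩ blue = ∅
  blue_blue_meet : ∀ C1 ∈ blue, ∀ C2 ∈ blue, (C1 ∩ C2).Nonempty
  green_blue_meet : ∀ C1 ∈ green, ∀ C2 ∈ blue, (C1 ∩ C2).Nonempty
  red_sep : ∀ C1 ∈ red, ∃ C2 ∈ blue, C1 ∩ C2 = ∅

section Defs1

variable {Rel : Type} {ar : Rel → ℕ} {V : Type} {Pr : Type} {pa : Pr → ℕ}

/-- The support of a structure: the elements occurring in some tuple. -/
def Str.supp (S : Str Rel ar V) : Set V :=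
  { u | ∃ (r : Rel) (t : Fin (ar r) → V), t ∈ S.interp r ∧ ∃ i, t i = u }

/-- Two structures are locally disjoint iff their interpretations are pointwise disjoint. -/
def LocDisj (S1 S2 : Str Rel ar V) : Prop :=
  ∀ r, S1.interp r ∩ S2.interp r = ∅

/-- Composition of structures (pointwise union of the interpretations). -/
def Str.comp (S1 S2 : Str Rel ar V) : Str Rel ar V where
  interp r := S1.interp r ∪ S2.interp r
  finite_interp r := (S1.finite_interp r).union (S2.finite_interp r)
  finite_active := by
    refine (S1.finite_active.union S2.finite_active).subset ?_
    intro r hr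
    simp only [Set.mem_setOf_eq, Set.mem_union, ne_eq] at hr ⊢
    rw [Set.union_empty_iff] at hr
    tauto

/-- Composition of a finite family of structures. -/
def bigComp {n : ℕ} (Ss : Fin n → Str Rel ar V) : Str Rel ar V where
  interp r := ⋃ i, (Ss i).interp r
  finite_interp r := Set.finite_iUnion fun i => (Ss i).finite_interp r
  finite_active := by
    refine (Set.finite_iUnion fun i => (Ss i).finite_active).subset ?_
    intro r hr
    simp only [Set.mem_setOf_eq, ne_eq, Set.iUnion_eq_empty, Set.mem_iUnion] at hr ⊢
    push_neg at hr
    obtain ⟨i, hi⟩ := hr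
    exact ⟨i, Set.nonempty_iff_ne_empty.mp hi⟩

/-- A tree decomposition of a structure: a finite tree whose nodes carry finite bags of
elements, covering every tuple, and such that the set of nodes containing any given
support element is nonempty and connected. -/
structure TreeDecomp (S : Str Rel ar V) where
  ι : Type
  instFin : Fintype ι
  G : SimpleGraph ι
  isTree : G.IsTree
  bag : ι → Finset V
  bag_cover : ∀ (r : Rel), ∀ t ∈ S.interp r, ∃ n : ι, ∀ i, t i ∈ bag n
  bag_conn : ∀ u ∈ S.supp, (SimpleGraph.induce {n : ι | u ∈ bag n} G).Connected

attribute [instance] TreeDecomp.instFin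

/-- The width of a tree decomposition: maximal bag size minus one. -/
def TreeDecomp.width {S : Str Rel ar V} (T : TreeDecomp S) : ℕ :=
  (Finset.univ.sup fun n : T.ι => (T.bag n).card) - 1

/-- The treewidth of a structure: the minimal width of a tree decomposition. -/
noncomputable def tw (S : Str Rel ar V) : ℕ :=
  sInf { w | ∃ T : TreeDecomp S, T.width = w }

/-- A set of structures is treewidth-bounded iff the treewidths of its members are
bounded. -/
def TWB (𝒮 : Set (Str Rel ar V)) : Prop :=
  ∃ k : ℕ, ∀ S ∈ 𝒮, tw S ≤ k

/-- The supremum of the treewidths of a set of structures (in `ℕ∞`). -/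
noncomputable def twSet (𝒮 : Set (Str Rel ar V)) : ℕ∞ :=
  ⨆ S ∈ 𝒮, (tw S : ℕ∞)

namespace SLR

/-- Free variables of a formula. -/
def fv : SLR Rel ar Pr pa → Set ℕ
  | .emp => ∅
  | .eq x y => {x, y}
  | .ne x y => {x, y}
  | .rel _ a => Set.range a
  | .pred _ a => Set.range a
  | .star φ ψ => φ.fv ∪ ψ.fv
  | .ex x φ => φ.fv \ {x}

/-- All variables (free or bound) occurring in a formula. -/
def vars : SLR Rel ar Pr pa → Set ℕ
  | .emp => ∅
  | .eq x y => {x, y}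
  | .ne x y => {x, y}
  | .rel _ a => Set.range a
  | .pred _ a => Set.range a
  | .star φ ψ => φ.vars ∪ ψ.vars
  | .ex x φ => insert x φ.vars

/-- Predicate-free formulas. -/
def PredFree : SLR Rel ar Pr pa → Prop
  | .pred _ _ => False
  | .star φ ψ => φ.PredFree ∧ ψ.PredFree
  | .ex _ φ => φ.PredFree
  | _ => True

/-- Quantifier- and predicate-free (qpf) formulas. -/
def QPF : SLR Rel ar Pr pa → Prop
  | .pred _ _ => False
  | .ex _ _ => False
  | .star φ ψ => φ.QPF ∧ ψ.QPF
  | _ => True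

/-- Formulas containing only relation atoms. -/
def RelOnly : SLR Rel ar Pr pa → Prop
  | .rel _ _ => True
  | .star φ ψ => φ.RelOnly ∧ ψ.RelOnly
  | _ => False

/-- Formulas containing only equality atoms (and `emp`). -/
def EqOnly : SLR Rel ar Pr pa → Prop
  | .emp => True
  | .eq _ _ => True
  | .star φ ψ => φ.EqOnly ∧ ψ.EqOnly
  | _ => False

/-- Equality-free formulas: no equality atom and no predicate atom in which the same
variable occurs twice. -/
def EqFreeF : SLR Rel ar Pr pa → Prop
  | .eq _ _ => False
  | .pred _ a => Function.Injective a
  | .star φ ψ => φ.EqFreeF ∧ ψ.EqFreeF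
  | .ex _ φ => φ.EqFreeF
  | _ => True

/-- The number of predicate atoms occurring in a formula. -/
def npred : SLR Rel ar Pr pa → ℕ
  | .pred _ _ => 1
  | .star φ ψ => φ.npred + ψ.npred
  | .ex _ φ => φ.npred
  | _ => 0

/-- The number of relation atoms occurring in a formula. -/
def nrel : SLR Rel ar Pr pa → ℕ
  | .rel _ _ => 1
  | .star φ ψ => φ.nrel + ψ.nrel
  | .ex _ φ => φ.nrel
  | _ => 0

/-- The set of relation symbols occurring in a formula. -/
def rels : SLR Rel ar Pr pa → Set Rel
  | .rel r _ => {r}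
  | .star φ ψ => φ.rels ∪ ψ.rels
  | .ex _ φ => φ.rels
  | _ => ∅

/-- The set of predicate symbols occurring in a formula. -/
def preds : SLR Rel ar Pr pa → Set Pr
  | .pred A _ => {A}
  | .star φ ψ => φ.preds ∪ ψ.preds
  | .ex _ φ => φ.preds
  | _ => ∅

/-- The quantifier-free matrix of a formula (erasing all existential quantifiers). -/
def matrix : SLR Rel ar Pr pa → SLR Rel ar Pr pa
  | .ex _ φ => φ.matrix
  | .star φ ψ => .star φ.matrix ψ.matrix
  | φ => φ

/-- The list of bound variables of a formula. -/
def binders : SLR Rel ar Pr pa → List ℕ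
  | .ex x φ => x :: φ.binders
  | .star φ ψ => φ.binders ++ ψ.binders
  | _ => []

/-- A formula is well-named iff its bound variables are pairwise distinct and distinct
from its free variables.  For a well-named formula, the matrix faithfully represents
the prenex form. -/
def WellNamed (χ : SLR Rel ar Pr pa) : Prop :=
  χ.binders.Nodup ∧ ∀ x ∈ χ.binders, x ∉ χ.fv

/-- The disequality `x ≠ y` occurs in the formula (as an unordered pair). -/
def neOccurs : SLR Rel ar Pr pa → ℕ → ℕ → Prop
  | .ne a b, x, y => (a = x ∧ b = y) ∨ (a = y ∧ b = x)
  | .star φ ψ, x, y => φ.neOccurs x y ∨ ψ.neOccurs x y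
  | .ex _ φ, x, y => φ.neOccurs x y
  | _, _, _ => False

/-- The equality `x = y` occurs in the formula (as an unordered pair). -/
def eqOccurs : SLR Rel ar Pr pa → ℕ → ℕ → Prop
  | .eq a b, x, y => (a = x ∧ b = y) ∨ (a = y ∧ b = x)
  | .star φ ψ, x, y => φ.eqOccurs x y ∨ ψ.eqOccurs x y
  | .ex _ φ, x, y => φ.eqOccurs x y
  | _, _, _ => False

end SLR

/-- The nullary predicate atom `A()` (the arguments are irrelevant when `pa A = 0`). -/
def natom (A : Pr) : SLR Rel ar Pr pa := .pred A fun _ => 0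

/-- Iterated separating conjunction: `starAll φ [χ1, …, χn] = χ1 * (χ2 * … * (χn * φ))`. -/
def starAll (φ : SLR Rel ar Pr pa) : List (SLR Rel ar Pr pa) → SLR Rel ar Pr pa
  | [] => φ
  | χ :: l => .star χ (starAll φ l)

end Defs1

/-- A set of inductive definitions (SID): a finite set of rules `A(0,…,pa A - 1) ← φ`
where the free variables of `φ` are among the parameters `0, …, pa A - 1`. -/
structure SID (Rel : Type) (ar : Rel → ℕ) (Pr : Type) (pa : Pr → ℕ) where
  rules : Pr → Set (SLR Rel ar Pr pa)
  finite_rules : {p : Pr × SLR Rel ar Pr pa | p.2 ∈ rules p.1}.Finite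
  wf : ∀ A, ∀ φ ∈ rules A, SLR.fv φ ⊆ {x | x < pa A}

section Defs2

variable {Rel : Type} {ar : Rel → ℕ} {V : Type} {Pr : Type} {pa : Pr → ℕ}

/-- The empty structure predicate. -/
def EmpS (S : Str Rel ar V) : Prop := ∀ r, S.interp r = ∅

/-- The satisfaction relation of SLR, parameterized by a store and an SID.
A predicate atom `A(y₁,…,yₙ)` is satisfied iff the body of some rule for `A` is
satisfied under the store mapping the parameter `i` to the value of `yᵢ₊₁`. -/
inductive Sat (Δ : SID Rel ar Pr pa) :
    Str Rel ar V → (ℕ → V) → SLR Rel ar Pr pa → Prop where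
  | emp {S : Str Rel ar V} {s : ℕ → V} : EmpS S → Sat Δ S s .emp
  | eq {S : Str Rel ar V} {s : ℕ → V} {x y : ℕ} :
      EmpS S → s x = s y → Sat Δ S s (.eq x y)
  | ne {S : Str Rel ar V} {s : ℕ → V} {x y : ℕ} :
      EmpS S → s x ≠ s y → Sat Δ S s (.ne x y)
  | rel {S : Str Rel ar V} {s : ℕ → V} {r : Rel} {a : Fin (ar r) → ℕ} :
      S.interp r = {fun i => s (a i)} → (∀ r', r' ≠ r → S.interp r' = ∅) →
      Sat Δ S s (.rel r a)
  | pred {S : Str Rel ar V} {s : ℕ → V} {A : Pr} {a : Fin (pa A) → ℕ}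
      {body : SLR Rel ar Pr pa} :
      body ∈ Δ.rules A →
      Sat Δ S (fun n => if h : n < pa A then s (a ⟨n, h⟩) else s n) body →
      Sat Δ S s (.pred A a)
  | star {S1 S2 : Str Rel ar V} {s : ℕ → V} {φ ψ : SLR Rel ar Pr pa} :
      LocDisj S1 S2 → Sat Δ S1 s φ → Sat Δ S2 s ψ →
      Sat Δ (S1.comp S2) s (.star φ ψ)
  | ex {S : Str Rel ar V} {s : ℕ → V} {x : ℕ} {φ : SLR Rel ar Pr pa} (u : V) :
      Sat Δ S (Function.update s x u) φ → Sat Δ S s (.ex x φ)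

/-- The set of `Δ`-models of a sentence (over universe `V`). -/
def SMod (Δ : SID Rel ar Pr pa) (φ : SLR Rel ar Pr pa) : Set (Str Rel ar V) :=
  { S | ∃ s : ℕ → V, Sat Δ S s φ }

/-- `IsSubst f φ φ'` holds iff `φ'` is obtained from `φ` by the capture-avoiding
substitution of `f x` for each free variable `x`, the bound variables being renamed
to avoid clashes. -/
inductive IsSubst : (ℕ → ℕ) → SLR Rel ar Pr pa → SLR Rel ar Pr pa → Prop where
  | emp {f : ℕ → ℕ} : IsSubst f .emp .emp
  | eq {f : ℕ → ℕ} {x y : ℕ} : IsSubst f (.eq x y) (.eq (f x) (f y))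
  | ne {f : ℕ → ℕ} {x y : ℕ} : IsSubst f (.ne x y) (.ne (f x) (f y))
  | rel {f : ℕ → ℕ} {r : Rel} {a : Fin (ar r) → ℕ} :
      IsSubst f (.rel r a) (.rel r (f ∘ a))
  | pred {f : ℕ → ℕ} {A : Pr} {a : Fin (pa A) → ℕ} :
      IsSubst f (.pred A a) (.pred A (f ∘ a))
  | star {f : ℕ → ℕ} {φ ψ φ' ψ' : SLR Rel ar Pr pa} :
      IsSubst f φ φ' → IsSubst f ψ ψ' → IsSubst f (.star φ ψ) (.star φ' ψ')
  | ex {f : ℕ → ℕ} {x z : ℕ} {φ φ' : SLR Rel ar Pr pa} :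
      (∀ y ∈ SLR.fv φ, y ≠ x → f y ≠ z) →
      IsSubst (Function.update f x z) φ φ' →
      IsSubst f (.ex x φ) (.ex z φ')

/-- One unfolding step: replace one predicate atom `A(y₁,…,yₙ)` by the body of a rule
for `A`, with the parameters substituted by `y₁,…,yₙ` (bound variables renamed to
avoid clashes). -/
inductive Step (Δ : SID Rel ar Pr pa) : SLR Rel ar Pr pa → SLR Rel ar Pr pa → Prop where
  | unfold {A : Pr} {a : Fin (pa A) → ℕ} {body ψ : SLR Rel ar Pr pa} :
      body ∈ Δ.rules A →
      IsSubst (fun n => if h : n < pa A then a ⟨n, h⟩ else n) body ψ →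
      Step Δ (.pred A a) ψ
  | starL {φ φ' ψ : SLR Rel ar Pr pa} : Step Δ φ φ' → Step Δ (.star φ ψ) (.star φ' ψ)
  | starR {φ ψ ψ' : SLR Rel ar Pr pa} : Step Δ ψ ψ' → Step Δ (.star φ ψ) (.star φ ψ')
  | exC {x : ℕ} {φ φ' : SLR Rel ar Pr pa} : Step Δ φ φ' → Step Δ (.ex x φ) (.ex x φ')

/-- `Δ`-unfolding: the reflexive-transitive closure of unfolding steps. -/
def Unfolds (Δ : SID Rel ar Pr pa) : SLR Rel ar Pr pa → SLR Rel ar Pr pa → Prop :=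
  Relation.ReflTransGen (Step Δ)

/-- `x = y` is a logical consequence of `ψ`. -/
def EqConseq (Δ : SID Rel ar Pr pa) (ψ : SLR Rel ar Pr pa) (x y : ℕ) : Prop :=
  ∀ (S : Str Rel ar V) (s : ℕ → V), Sat Δ S s ψ → s x = s y

/-- A store is canonical for `ψ` iff it identifies only variables that are equated as a
logical consequence of `ψ`. -/
def CanonicalStore (Δ : SID Rel ar Pr pa) (s : ℕ → V) (ψ : SLR Rel ar Pr pa) : Prop :=
  ∀ x ∈ ψ.fv, ∀ y ∈ ψ.fv, s x = s y → EqConseq (V := V) Δ ψ x y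

/-- `(S, d)` is a rich canonical `Δ`-model of `φ`: for some complete `Δ`-unfolding of
`φ` into a well-named predicate-free formula `χ` (i.e. of the form `∃x⃗.ψ` with `ψ` qpf,
up to hoisting of quantifiers) and some store canonical for the matrix `ψ`, the
structure `S` satisfies `ψ` and `d` records the disequalities of `ψ` under the store. -/
def RichCanonical (Δ : SID Rel ar Pr pa) (φ : SLR Rel ar Pr pa)
    (S : Str Rel ar V) (d : V → V → Prop) : Prop :=
  ∃ χ : SLR Rel ar Pr pa, Unfolds Δ φ χ ∧ χ.PredFree ∧ χ.WellNamed ∧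
    ∃ s : ℕ → V, CanonicalStore Δ s χ.matrix ∧ Sat Δ S s χ.matrix ∧
      ∀ u v : V, d u v ↔ ∃ x y : ℕ, s x = u ∧ s y = v ∧ χ.matrix.neOccurs x y

/-- The set of canonical `Δ`-models of `φ`. -/
def Canonical (Δ : SID Rel ar Pr pa) (φ : SLR Rel ar Pr pa) : Set (Str Rel ar V) :=
  { S | ∃ d, RichCanonical Δ φ S d }

/-- `S1` is a substructure of `S2`: its interpretation consists exactly of the tuples of
`S2` all of whose elements belong to the support of `S1`. -/
def Substr (S1 S2 : Str Rel ar V) : Prop :=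
  ∀ r, S1.interp r = { t ∈ S2.interp r | ∀ i, t i ∈ S1.supp }

/-- Two elements touch iff they occur in a common tuple. -/
def Touching (S : Str Rel ar V) (u v : V) : Prop :=
  ∃ (r : Rel) (t : Fin (ar r) → V), t ∈ S.interp r ∧ (∃ i, t i = u) ∧ ∃ j, t j = v

/-- A structure is connected iff any two support elements are joined by a path of
pairwise overlapping tuples. -/
def ConnectedS (S : Str Rel ar V) : Prop :=
  ∀ u ∈ S.supp, ∀ v ∈ S.supp, Relation.ReflTransGen (Touching S) u v

/-- `S1` is a maximally connected substructure of `S2`. -/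
def MaxConn (S1 S2 : Str Rel ar V) : Prop :=
  Substr S1 S2 ∧ ConnectedS S1 ∧
    ∀ S1' : Str Rel ar V, Substr S1' S2 → ConnectedS S1' → Substr S1 S1' → S1 = S1'

/-- The set of maximally connected substructures of a structure. -/
def split (S : Str Rel ar V) : Set (Str Rel ar V) := { S' | MaxConn S' S }

/-- `split`, lifted to sets of structures. -/
def splitSet (𝒮 : Set (Str Rel ar V)) : Set (Str Rel ar V) := ⋃ S ∈ 𝒮, split S

/-- The smallest equivalence relation containing `R`. -/
def EqvOf (R : V → V → Prop) (a b : V) : Prop :=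
  ∀ E : V → V → Prop, Equivalence E → (∀ x y, R x y → E x y) → E a b

/-- An equivalence relation is compatible with a structure iff any two distinct tuples of
the interpretation of a relation symbol differ at some position modulo the relation. -/
def CompatibleE (S : Str Rel ar V) (E : V → V → Prop) : Prop :=
  ∀ r, ∀ t1 ∈ S.interp r, ∀ t2 ∈ S.interp r, t1 ≠ t2 → ∃ i, ¬ E (t1 i) (t2 i)

/-- The image of a structure under a map on elements. -/
def mapStr (h : V → V) (S : Str Rel ar V) : Str Rel ar V where
  interp r := (fun t => h ∘ t) '' S.interp r
  finite_interp r := (S.finite_interp r).image _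
  finite_active := by
    refine S.finite_active.subset ?_
    intro r hr
    simp only [Set.mem_setOf_eq, ne_eq] at hr ⊢
    intro h0
    exact hr (by rw [h0, Set.image_empty])

/-- `S'` is (a copy over `V` of) the quotient of `S` by the equivalence relation `E`. -/
def QuotBy (S : Str Rel ar V) (E : V → V → Prop) (S' : Str Rel ar V) : Prop :=
  ∃ h : V → V, (∀ u ∈ S.supp, ∀ v ∈ S.supp, (E u v ↔ h u = h v)) ∧ S' = mapStr h S

/-- `S'` is an isomorphic copy of `S` (over the same universe `V`). -/
def IsoCopy (S S' : Str Rel ar V) : Prop :=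
  ∃ h : V → V, Set.InjOn h S.supp ∧ S' = mapStr h S

/-- A matching: a set of pairs such that distinct pairs share no element. -/
def IsMatching (M : Set (V × V)) : Prop :=
  ∀ p ∈ M, ∀ q ∈ M, p ≠ q → ({p.1, p.2} ∩ {q.1, q.2} : Set V) = ∅

/-- The set of internal fusions of a structure: quotients by compatible equivalence
relations (up to isomorphism). -/
def IntFusion (S : Str Rel ar V) : Set (Str Rel ar V) :=
  { S' | ∃ E : V → V → Prop, Equivalence E ∧ CompatibleE S E ∧ QuotBy S E S' }

/-- Internal fusions of members of a set of structures. -/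
def ifSet (𝒮 : Set (Str Rel ar V)) : Set (Str Rel ar V) := ⋃ S ∈ 𝒮, IntFusion S

/-- Internal fusions of a rich canonical model: quotients by compatible equivalence
relations that do not violate the disequality relation `d`. -/
def SIntFusion (S : Str Rel ar V) (d : V → V → Prop) : Set (Str Rel ar V) :=
  { S' | ∃ E : V → V → Prop, Equivalence E ∧ CompatibleE S E ∧
      (∀ u v, d u v → ¬ E u v) ∧ QuotBy S E S' }

/-- External fusions of two structures: quotients of the composition of disjoint
isomorphic copies by the smallest equivalence relation containing a nonempty matching
between supports that is compatible with the composition. -/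
def ExtFusion (S1 S2 : Str Rel ar V) : Set (Str Rel ar V) :=
  { S' | ∃ (S1' S2' : Str Rel ar V) (M : Set (V × V)),
      IsoCopy S1 S1' ∧ IsoCopy S2 S2' ∧ S1'.supp ∩ S2'.supp = ∅ ∧
      M.Nonempty ∧ IsMatching M ∧ (∀ p ∈ M, p.1 ∈ S1'.supp ∧ p.2 ∈ S2'.supp) ∧
      CompatibleE (S1'.comp S2') (EqvOf fun a b => (a, b) ∈ M) ∧
      QuotBy (S1'.comp S2') (EqvOf fun a b => (a, b) ∈ M) S' }

/-- Single-pair external fusions: external fusions whose matching is a single pair. -/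
def ExtFusion1 (S1 S2 : Str Rel ar V) : Set (Str Rel ar V) :=
  { S' | ∃ (S1' S2' : Str Rel ar V) (M : Set (V × V)),
      IsoCopy S1 S1' ∧ IsoCopy S2 S2' ∧ S1'.supp ∩ S2'.supp = ∅ ∧
      (∃ p : V × V, M = {p}) ∧ IsMatching M ∧
      (∀ p ∈ M, p.1 ∈ S1'.supp ∧ p.2 ∈ S2'.supp) ∧
      CompatibleE (S1'.comp S2') (EqvOf fun a b => (a, b) ∈ M) ∧
      QuotBy (S1'.comp S2') (EqvOf fun a b => (a, b) ∈ M) S' }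

/-- Closure of a set of structures under external fusions (structures being identified
up to isomorphism). -/
inductive efStar (𝒮 : Set (Str Rel ar V)) : Str Rel ar V → Prop where
  | base {S : Str Rel ar V} : S ∈ 𝒮 → efStar 𝒮 S
  | iso {S S' : Str Rel ar V} : efStar 𝒮 S → IsoCopy S S' → efStar 𝒮 S'
  | fuse {S1 S2 S : Str Rel ar V} :
      efStar 𝒮 S1 → efStar 𝒮 S2 → S ∈ ExtFusion S1 S2 → efStar 𝒮 S

def efStarSet (𝒮 : Set (Str Rel ar V)) : Set (Str Rel ar V) := { S | efStar 𝒮 S }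

/-- Closure of a set of structures under single-pair external fusions. -/
inductive ef1Star (𝒮 : Set (Str Rel ar V)) : Str Rel ar V → Prop where
  | base {S : Str Rel ar V} : S ∈ 𝒮 → ef1Star 𝒮 S
  | iso {S S' : Str Rel ar V} : ef1Star 𝒮 S → IsoCopy S S' → ef1Star 𝒮 S'
  | fuse {S1 S2 S : Str Rel ar V} :
      ef1Star 𝒮 S1 → ef1Star 𝒮 S2 → S ∈ ExtFusion1 S1 S2 → ef1Star 𝒮 S

def ef1StarSet (𝒮 : Set (Str Rel ar V)) : Set (Str Rel ar V) := { S | ef1Star 𝒮 S }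

/-- Closure of a set of structures under both internal and external fusions. -/
inductive iefStar (𝒮 : Set (Str Rel ar V)) : Str Rel ar V → Prop where
  | base {S : Str Rel ar V} : S ∈ 𝒮 → iefStar 𝒮 S
  | iso {S S' : Str Rel ar V} : iefStar 𝒮 S → IsoCopy S S' → iefStar 𝒮 S'
  | fuse {S1 S2 S : Str Rel ar V} :
      iefStar 𝒮 S1 → iefStar 𝒮 S2 → S ∈ ExtFusion S1 S2 → iefStar 𝒮 S
  | intf {S1 S : Str Rel ar V} : iefStar 𝒮 S1 → S ∈ IntFusion S1 → iefStar 𝒮 S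

def iefStarSet (𝒮 : Set (Str Rel ar V)) : Set (Str Rel ar V) := { S | iefStar 𝒮 S }

/-- The color of an element: the set of relation symbols whose interpretation contains
the constant tuple at this element. -/
def color (S : Str Rel ar V) (u : V) : Set Rel :=
  { r : Rel | (fun _ => u) ∈ S.interp r }

/-- The multiplicity of a color in the multiset color abstraction of a structure. -/
noncomputable def colorMult (S : Str Rel ar V) (C : Set Rel) : ℕ :=
  {u ∈ S.supp | color S u = C}.ncard

/-- The `k`-multiset color abstraction of a structure: the sub-multisets of cardinality
at most `k` of the multiset of colors of its support elements. -/
noncomputable def MkOf (k : ℕ) (S : Str Rel ar V) : Set (Multiset (Set Rel)) :=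
  { M | Multiset.card M ≤ k ∧
      ∀ C : Set Rel, @Multiset.count _ (Classical.decEq _) C M ≤ colorMult S C }

/-- The `k`-multiset color abstraction, lifted to sets of structures. -/
noncomputable def MkSet (k : ℕ) (𝒮 : Set (Str Rel ar V)) : Set (Multiset (Set Rel)) :=
  ⋃ S ∈ 𝒮, MkOf k S

/-- A set of structures conforms to an RGB color scheme iff (1) in any member, if some
support element has a red color then all other support elements have blue colors, and
(2) in any external fusion of members, every green color occurs at most twice. -/
def Conforms (𝒮 : Set (Str Rel ar V)) (P : RGB Rel) : Prop :=
  (∀ S ∈ 𝒮, ∀ u ∈ S.supp, color S u ∈ P.red →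
      ∀ v ∈ S.supp, v ≠ u → color S v ∈ P.blue) ∧
  (∀ S ∈ efStarSet 𝒮, ∀ C ∈ P.green, colorMult S C ≤ 2)

/-- Type `R` structures: only blue and red colors, with exactly one red element. -/
def TypeR (P : RGB Rel) (S : Str Rel ar V) : Prop :=
  (∀ u ∈ S.supp, color S u ∈ P.blue ∨ color S u ∈ P.red) ∧
  {u ∈ S.supp | color S u ∈ P.red}.ncard = 1

/-- Type `G` structures: only blue and green colors, with at least one green element. -/
def TypeG (P : RGB Rel) (S : Str Rel ar V) : Prop :=
  (∀ u ∈ S.supp, color S u ∈ P.blue ∨ color S u ∈ P.green) ∧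
  {u ∈ S.supp | color S u ∈ P.green}.Nonempty

/-- Type `B` structures: only blue colors. -/
def TypeB (P : RGB Rel) (S : Str Rel ar V) : Prop :=
  ∀ u ∈ S.supp, color S u ∈ P.blue

namespace SID

/-- The set of predicate symbols occurring in an SID. -/
def predsOf (Δ : SID Rel ar Pr pa) : Set Pr :=
  {A | Δ.rules A ≠ ∅} ∪ ⋃ A, ⋃ φ ∈ Δ.rules A, SLR.preds φ

/-- The set of relation symbols occurring in an SID. -/
def relsOf (Δ : SID Rel ar Pr pa) : Set Rel :=
  ⋃ A, ⋃ φ ∈ Δ.rules A, SLR.rels φ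

/-- The number of predicate symbols occurring in an SID. -/
noncomputable def Pcount (Δ : SID Rel ar Pr pa) : ℕ := Δ.predsOf.ncard

/-- The number of relation symbols occurring in an SID. -/
noncomputable def Rcount (Δ : SID Rel ar Pr pa) : ℕ := Δ.relsOf.ncard

/-- The maximum number of variables (free or existentially quantified) occurring in a
rule of the SID. -/
noncomputable def maxvar (Δ : SID Rel ar Pr pa) : ℕ :=
  sSup { n | ∃ A, ∃ φ ∈ Δ.rules A, n = ({x | x < pa A} ∪ SLR.vars φ).ncard }

/-- The maximum number of predicate atoms occurring in a rule of the SID. -/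
noncomputable def maxpredatoms (Δ : SID Rel ar Pr pa) : ℕ :=
  sSup { n | ∃ A, ∃ φ ∈ Δ.rules A, n = SLR.npred φ }

/-- The maximum number of relation atoms occurring in a rule of the SID. -/
noncomputable def maxrelatoms (Δ : SID Rel ar Pr pa) : ℕ :=
  sSup { n | ∃ A, ∃ φ ∈ Δ.rules A, n = SLR.nrel φ }

/-- The maximum arity of a relation symbol occurring in the SID. -/
noncomputable def maxrelarity (Δ : SID Rel ar Pr pa) : ℕ :=
  sSup { n | ∃ r ∈ Δ.relsOf, n = ar r }

/-- The maximum arity of a predicate symbol occurring in the SID. -/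
noncomputable def maxpredarity (Δ : SID Rel ar Pr pa) : ℕ :=
  sSup { n | ∃ A ∈ Δ.predsOf, n = pa A }

/-- An SID is equality-free iff all its rules are equality-free. -/
def EqFree (Δ : SID Rel ar Pr pa) : Prop :=
  ∀ A, ∀ φ ∈ Δ.rules A, SLR.EqFreeF φ

end SID

/-- An SID is all-satisfiable for a nullary predicate `A` iff every predicate-free
outcome of a complete unfolding of `A` is satisfiable. -/
def AllSat (Δ : SID Rel ar Pr pa) (A : Pr) : Prop :=
  ∀ χ : SLR Rel ar Pr pa, Unfolds Δ (natom A) χ → χ.PredFree →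
    ∃ (S : Str Rel ar V) (s : ℕ → V), Sat Δ S s χ

/-- An SID is expandable for a nullary predicate `A`: any finite family of pairwise
disjoint canonical models embeds, as a substructure, into a rich canonical model, in a
way that neither disequalities nor overlapping tuples connect two distinct members. -/
def Expandable (Δ : SID Rel ar Pr pa) (A : Pr) : Prop :=
  ∀ (n : ℕ) (Ss : Fin n → Str Rel ar V),
    (∀ i, Ss i ∈ Canonical (V := V) Δ (natom A)) →
    (∀ i j, i ≠ j → (Ss i).supp ∩ (Ss j).supp = ∅) →
    ∃ (S : Str Rel ar V) (d : V → V → Prop),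
      RichCanonical Δ (natom A) S d ∧
      Substr (bigComp Ss) S ∧
      (∀ i j : Fin n, i < j → ∀ u ∈ (Ss i).supp, ∀ v ∈ (Ss j).supp, ¬ d u v) ∧
      ¬ ∃ (r : Rel) (t1 t2 : Fin (ar r) → V) (i j : Fin n),
          t1 ∈ S.interp r ∧ t2 ∈ S.interp r ∧ i < j ∧
          (∃ k, t1 k ∈ (Ss i).supp) ∧ (∃ k, t2 k ∈ (Ss j).supp) ∧ ∃ k l, t1 k = t2 l

/-- The set of structures obtained by internal fusion of rich canonical `Δ`-models. -/
def sifSet (Δ : SID Rel ar Pr pa) (φ : SLR Rel ar Pr pa) : Set (Str Rel ar V) :=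
  { S' | ∃ (S : Str Rel ar V) (d : V → V → Prop),
      RichCanonical Δ φ S d ∧ S' ∈ SIntFusion S d }

end Defs2

end SLRTW

/-!
A canonical model `S` of `A()` satisfies, under a canonical store `s`, the matrix of a
closed, well-named, predicate-free unfolding `χ` of `A()`. The subformula occurrences of `χ`,
each joined to its parent, form a tree, and putting into the bag of an occurrence the values
under `s` of its free variables gives a tree decomposition of `S`. Unfolding never increases
the free variables of a subformula and substitution never increases their number, so every
bag has at most `maxvar Δ` elements. A tuple of `S` is the value of a relation atom and lies
in that atom's bag. The occurrences in which a variable is free form a subtree hanging below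
its unique binder, and two variables with the same value under a canonical store are linked
by a chain of equality atoms, each lying in the scopes of both of its variables; hence the
occurrences whose bag contains a given element are connected.
-/

lemma Equivalence.sInf_setOf_eq_iff {r : ℕ → ℕ → Prop} (hr : Equivalence r) {x y : ℕ} :
    sInf {z | r x z} = sInf {z | r y z} ↔ r x y := by
  refine ⟨fun h => ?_, fun h => congrArg sInf <|
    Set.ext fun z => ⟨hr.trans (hr.symm h), hr.trans h⟩⟩
  have hx : r x (sInf {z | r x z}) := Nat.sInf_mem ⟨x, hr.refl x⟩
  have hy : r y (sInf {z | r y z}) := Nat.sInf_mem ⟨y, hr.refl y⟩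
  exact hr.trans (h ▸ hx) (hr.symm hy)

namespace SimpleGraph

variable {α : Type*}

def parentGraph (par : α → α) : SimpleGraph α :=
  fromRel fun a b => a = par b

variable {par : α → α} {rk : α → ℕ}

lemma parentGraph_adj_par {a : α} (h : par a ≠ a) : (parentGraph par).Adj a (par a) := by
  simp [parentGraph, h.symm]

lemma eq_par_of_parentGraph_adj (hrk : ∀ a, par a ≠ a → rk (par a) < rk a) {a b : α}
    (hab : (parentGraph par).Adj a b) (hle : rk b ≤ rk a) : b = par a := by
  obtain ⟨hne, rfl | rfl⟩ := hab
  · exact absurd (hrk b hne) (not_lt.mpr hle)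
  · rfl

theorem parentGraph_isAcyclic (hrk : ∀ a, par a ≠ a → rk (par a) < rk a) :
    (parentGraph par).IsAcyclic := by
  classical
  intro v c hc
  obtain ⟨u, hu, hmax⟩ := c.support.toFinset.exists_max_image rk ⟨v, by simp⟩
  rw [List.mem_toFinset] at hu
  set c' := c.rotate u hu
  have hc' : c'.IsCycle := hc.rotate hu
  -- both neighbours of the vertex of maximal rank on the cycle are its parent
  have hpar : ∀ w ∈ c'.support, (parentGraph par).Adj u w → w = par u := fun w hw huw =>
    eq_par_of_parentGraph_adj hrk huw
      (hmax w (List.mem_toFinset.mpr ((c.mem_support_rotate_iff u hu).mp hw)))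
  exact hc'.snd_ne_penultimate <|
    (hpar _ (c'.getVert_mem_support 1) (c'.adj_snd hc'.not_nil)).trans
      (hpar _ (c'.getVert_mem_support _) (c'.adj_penultimate hc'.not_nil).symm).symm

theorem parentGraph_induce_connected (hrk : ∀ a, par a ≠ a → rk (par a) < rk a)
    {T : Set α} (hT : T.Nonempty)
    (hexit : ∀ a ∈ T, ∀ b ∈ T,
      (par a ∉ T ∨ par a = a) → (par b ∉ T ∨ par b = b) → a = b) :
    ((parentGraph par).induce T).Connected := by
  set r := Function.argminOn rk T hT
  have hr : r ∈ T := Function.argminOn_mem rk T hT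
  have hr_exit : par r ∉ T ∨ par r = r := by
    by_contra! h
    exact Function.not_lt_argminOn rk T h.1 (hrk r h.2)
  have hreach : ∀ n, ∀ a (ha : a ∈ T), rk a = n →
      ((parentGraph par).induce T).Reachable ⟨a, ha⟩ ⟨r, hr⟩ := by
    intro n
    induction n using Nat.strong_induction_on with
    | _ n ih =>
      intro a ha hn
      by_cases h : par a ∉ T ∨ par a = a
      · obtain rfl := hexit a ha r hr h hr_exit
        rfl
      · push Not at h
        have hadj : ((parentGraph par).induce T).Adj ⟨a, ha⟩ ⟨par a, h.1⟩ :=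
          parentGraph_adj_par h.2
        exact hadj.reachable.trans (ih _ (hn ▸ hrk a h.2) _ h.1 rfl)
  rw [connected_iff_exists_forall_reachable]
  exact ⟨⟨r, hr⟩, fun a => (hreach _ a.1 a.2 rfl).symm⟩

theorem parentGraph_isTree [Nonempty α] (hrk : ∀ a, par a ≠ a → rk (par a) < rk a)
    (hroot : ∀ a b, par a = a → par b = b → a = b) : (parentGraph par).IsTree := by
  refine ⟨?_, parentGraph_isAcyclic hrk⟩
  rw [← (parentGraph par).induceUnivIso.connected_iff]
  refine parentGraph_induce_connected hrk Set.univ_nonempty fun a _ b _ ha hb => ?_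
  simp only [Set.mem_univ, not_true_eq_false, false_or] at ha hb
  exact hroot a b ha hb

lemma induce_reachable_of_subset {G : SimpleGraph α} {T P : Set α}
    (hT : (G.induce T).Preconnected) (hTP : T ⊆ P) {a b : α} (ha : a ∈ T) (hb : b ∈ T) :
    (G.induce P).Reachable ⟨a, hTP ha⟩ ⟨b, hTP hb⟩ :=
  (hT ⟨a, ha⟩ ⟨b, hb⟩).map (induceHomOfLE G hTP).toHom

end SimpleGraph

namespace SLRTW

namespace SLR

variable {Rel : Type} {ar : Rel → ℕ} {Pr : Type} {pa : Pr → ℕ}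

lemma fv_subset_vars (φ : SLR Rel ar Pr pa) : φ.fv ⊆ φ.vars := by
  induction φ with
  | star φ ψ ih₁ ih₂ => exact Set.union_subset_union ih₁ ih₂
  | ex x φ ih => exact Set.sdiff_subset.trans (ih.trans (Set.subset_insert _ _))
  | _ => exact subset_rfl

lemma vars_finite (φ : SLR Rel ar Pr pa) : φ.vars.Finite := by
  induction φ with
  | emp => exact Set.finite_empty
  | eq x y | ne x y => exact (Set.finite_singleton y).insert x
  | rel r a | pred A a => exact Set.finite_range a
  | star φ ψ ih₁ ih₂ => exact ih₁.union ih₂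
  | ex x φ ih => exact ih.insert x

lemma fv_finite (φ : SLR Rel ar Pr pa) : φ.fv.Finite :=
  φ.vars_finite.subset φ.fv_subset_vars

lemma eqOccurs_comm {φ : SLR Rel ar Pr pa} {x y : ℕ} : φ.eqOccurs x y ↔ φ.eqOccurs y x := by
  induction φ with
  | eq a b => simp only [eqOccurs]; tauto
  | star φ ψ ih₁ ih₂ => simp only [eqOccurs, ih₁, ih₂]
  | ex z φ ih => exact ih
  | _ => exact Iff.rfl

lemma fv_subset_fv_matrix (φ : SLR Rel ar Pr pa) : φ.fv ⊆ φ.matrix.fv := by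
  induction φ with
  | star φ ψ ih₁ ih₂ => exact Set.union_subset_union ih₁ ih₂
  | ex x φ ih => exact Set.sdiff_subset.trans ih
  | _ => exact subset_rfl

lemma PredFree.matrix_qpf {φ : SLR Rel ar Pr pa} (h : φ.PredFree) : φ.matrix.QPF := by
  induction φ with
  | star φ ψ ih₁ ih₂ => exact ⟨ih₁ h.1, ih₂ h.2⟩
  | ex x φ ih => exact ih h
  | pred A a => exact h
  | _ => trivial

def atoms : SLR Rel ar Pr pa → Set (SLR Rel ar Pr pa)
  | .star φ ψ => φ.atoms ∪ ψ.atoms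
  | .ex _ φ => φ.atoms
  | φ => {φ}

lemma atoms_matrix (φ : SLR Rel ar Pr pa) : φ.matrix.atoms = φ.atoms := by
  induction φ with
  | star φ ψ ih₁ ih₂ => simp only [matrix, atoms, ih₁, ih₂]
  | ex x φ ih => exact ih
  | _ => rfl

lemma eq_mem_atoms_of_eqOccurs {φ : SLR Rel ar Pr pa} {x y : ℕ} (h : φ.eqOccurs x y) :
    .eq x y ∈ φ.atoms ∨ .eq y x ∈ φ.atoms := by
  induction φ with
  | eq a b => rcases h with ⟨rfl, rfl⟩ | ⟨rfl, rfl⟩ <;> simp [atoms]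
  | star φ ψ ih₁ ih₂ =>
    rcases h with h | h
    · exact (ih₁ h).imp Or.inl Or.inl
    · exact (ih₂ h).imp Or.inr Or.inr
  | ex z φ ih => exact ih h
  | _ => exact h.elim

/-- `false` selects the left operand of `*` and the body of `∃`. -/
def child : Bool → SLR Rel ar Pr pa → Option (SLR Rel ar Pr pa)
  | false, .star φ _ => some φ
  | true, .star _ ψ => some ψ
  | false, .ex _ φ => some φ
  | _, _ => none

/-- Positions are lists of directions from the root. -/
def subAt : SLR Rel ar Pr pa → List Bool → Option (SLR Rel ar Pr pa)
  | φ, [] => some φ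
  | φ, b :: l => (child b φ).bind fun ψ => subAt ψ l

def depth : SLR Rel ar Pr pa → ℕ
  | .star φ ψ => max φ.depth ψ.depth + 1
  | .ex _ φ => φ.depth + 1
  | _ => 0

variable {φ ψ : SLR Rel ar Pr pa} {b : Bool} {l : List Bool}

lemma child_eq_some :
    child b φ = some ψ ↔ (∃ φ', b = false ∧ φ = .star ψ φ') ∨
      (∃ φ', b = true ∧ φ = .star φ' ψ) ∨ ∃ x, b = false ∧ φ = .ex x ψ := by
  cases φ <;> cases b <;> simp [child, eq_comm]

lemma subAt_cons_eq_some :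
    φ.subAt (b :: l) = some ψ ↔ ∃ φ', child b φ = some φ' ∧ φ'.subAt l = some ψ :=
  Option.bind_eq_some_iff

lemma subAt_append (φ : SLR Rel ar Pr pa) (l₁ l₂ : List Bool) :
    φ.subAt (l₁ ++ l₂) = (φ.subAt l₁).bind fun ψ => ψ.subAt l₂ := by
  induction l₁ generalizing φ with
  | nil => rfl
  | cons b l ih => simp only [List.cons_append, subAt, ih, Option.bind_assoc]

lemma subAt_concat (φ : SLR Rel ar Pr pa) (l : List Bool) (b : Bool) :
    φ.subAt (l ++ [b]) = (φ.subAt l).bind (child b) := by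
  simp [subAt_append, subAt]

lemma depth_lt_of_child (h : child b φ = some ψ) : ψ.depth < φ.depth := by
  rcases child_eq_some.mp h with ⟨_, -, rfl⟩ | ⟨_, -, rfl⟩ | ⟨_, -, rfl⟩ <;>
    simp [depth]

lemma length_le_depth_of_subAt (h : φ.subAt l = some ψ) : l.length ≤ φ.depth := by
  induction l generalizing φ with
  | nil => simp
  | cons b l ih =>
    obtain ⟨φ', hc, hl⟩ := subAt_cons_eq_some.mp h
    exact Nat.succ_le_of_lt ((ih hl).trans_lt (depth_lt_of_child hc))

lemma fv_of_child {x : ℕ} (h : child b φ = some ψ) (hx : x ∈ ψ.fv) :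
    x ∈ φ.fv ∨ φ = .ex x ψ := by
  rcases child_eq_some.mp h with ⟨_, -, rfl⟩ | ⟨_, -, rfl⟩ | ⟨y, -, rfl⟩
  · exact .inl (.inl hx)
  · exact .inl (.inr hx)
  · by_cases hxy : x = y
    · exact .inr (hxy ▸ rfl)
    · exact .inl ⟨hx, hxy⟩

lemma fv_subset_fv_matrix_of_subAt (h : φ.subAt l = some ψ) : ψ.fv ⊆ φ.matrix.fv := by
  induction l generalizing φ with
  | nil => exact Option.some_inj.mp h ▸ φ.fv_subset_fv_matrix
  | cons b l ih =>
    obtain ⟨φ', hc, hl⟩ := subAt_cons_eq_some.mp h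
    refine (ih hl).trans ?_
    rcases child_eq_some.mp hc with ⟨_, -, rfl⟩ | ⟨_, -, rfl⟩ | ⟨_, -, rfl⟩
    · exact Set.subset_union_left
    · exact Set.subset_union_right
    · exact subset_rfl

lemma exists_subAt_of_mem_atoms {α : SLR Rel ar Pr pa} (h : α ∈ φ.atoms) :
    ∃ l, φ.subAt l = some α := by
  induction φ with
  | star φ₁ φ₂ ih₁ ih₂ =>
    rcases h with h | h
    · obtain ⟨l, hl⟩ := ih₁ h
      exact ⟨false :: l, hl⟩
    · obtain ⟨l, hl⟩ := ih₂ h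
      exact ⟨true :: l, hl⟩
  | ex x φ ih =>
    obtain ⟨l, hl⟩ := ih h
    exact ⟨false :: l, hl⟩
  | _ => exact ⟨[], congrArg some (Set.mem_singleton_iff.mp h).symm⟩

lemma binders_sublist_of_child (h : child b φ = some ψ) : ψ.binders.Sublist φ.binders := by
  rcases child_eq_some.mp h with ⟨_, -, rfl⟩ | ⟨_, -, rfl⟩ | ⟨_, -, rfl⟩
  · exact List.sublist_append_left _ _
  · exact List.sublist_append_right _ _
  · exact List.sublist_cons_self _ _

lemma mem_binders_of_subAt {x : ℕ} (h : φ.subAt l = some (.ex x ψ)) : x ∈ φ.binders := by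
  induction l generalizing φ with
  | nil => exact Option.some_inj.mp h ▸ List.mem_cons_self
  | cons b l ih =>
    obtain ⟨φ', hc, hl⟩ := subAt_cons_eq_some.mp h
    exact (binders_sublist_of_child hc).subset (ih hl)

lemma subAt_cons_ne_of_nodup {x : ℕ} {ψ' : SLR Rel ar Pr pa}
    (hnd : (SLR.ex x ψ).binders.Nodup) :
    (SLR.ex x ψ).subAt (b :: l) ≠ some (.ex x ψ') := by
  intro h
  obtain ⟨φ', hc, hl⟩ := subAt_cons_eq_some.mp h
  obtain ⟨rfl, rfl⟩ : b = false ∧ φ' = ψ := by cases b <;> simp_all [child]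
  exact (List.nodup_cons.mp hnd).1 (mem_binders_of_subAt hl)

lemma subAt_ex_unique {x : ℕ} {l₁ l₂ : List Bool} {ψ₁ ψ₂ : SLR Rel ar Pr pa}
    (hnd : φ.binders.Nodup) (h₁ : φ.subAt l₁ = some (.ex x ψ₁))
    (h₂ : φ.subAt l₂ = some (.ex x ψ₂)) : l₁ = l₂ := by
  induction l₁ generalizing φ l₂ with
  | nil =>
    cases l₂ with
    | nil => rfl
    | cons b l =>
      obtain rfl := Option.some_inj.mp h₁
      exact absurd h₂ (subAt_cons_ne_of_nodup hnd)
  | cons b₁ l₁ ih =>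
    cases l₂ with
    | nil =>
      obtain rfl := Option.some_inj.mp h₂
      exact absurd h₁ (subAt_cons_ne_of_nodup hnd)
    | cons b₂ l₂ =>
      obtain ⟨φ₁, hc₁, hl₁⟩ := subAt_cons_eq_some.mp h₁
      obtain ⟨φ₂, hc₂, hl₂⟩ := subAt_cons_eq_some.mp h₂
      by_cases hb : b₁ = b₂
      · subst hb
        obtain rfl : φ₁ = φ₂ := Option.some_inj.mp (hc₁.symm.trans hc₂)
        rw [ih ((binders_sublist_of_child hc₁).nodup hnd) hl₁ hl₂]
      · -- the two directions lead to the two sides of a `star`, whose binders are disjoint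
        have hx₁ := mem_binders_of_subAt hl₁
        have hx₂ := mem_binders_of_subAt hl₂
        have hdisj {α β : SLR Rel ar Pr pa} (h : φ = .star α β) :
            α.binders.Disjoint β.binders :=
          List.disjoint_of_nodup_append (h ▸ hnd : (SLR.star α β).binders.Nodup)
        rcases child_eq_some.mp hc₁ with
          ⟨_, rfl, rfl⟩ | ⟨_, rfl, rfl⟩ | ⟨_, rfl, rfl⟩ <;>
          rcases child_eq_some.mp hc₂ with ⟨_, rfl, h⟩ | ⟨_, rfl, h⟩ | ⟨_, rfl, h⟩ <;>
          simp only [SLR.star.injEq, reduceCtorEq, not_true_eq_false] at h hb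
        · exact (hdisj rfl hx₁ (h.2 ▸ hx₂)).elim
        · exact (hdisj rfl (h.1 ▸ hx₂) hx₁).elim

end SLR

section QPFSemantics

variable {Rel : Type} {ar : Rel → ℕ} {V : Type} {Pr : Type} {pa : Pr → ℕ}
  {Δ : SID Rel ar Pr pa} {S : Str Rel ar V} {s : ℕ → V} {ψ : SLR Rel ar Pr pa}

lemma Sat.mem_interp_iff (hq : ψ.QPF) (hsat : Sat Δ S s ψ) {r : Rel} {t : Fin (ar r) → V} :
    t ∈ S.interp r ↔ ∃ a, .rel r a ∈ ψ.atoms ∧ t = fun i => s (a i) := by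
  induction hsat with
  | emp hS | eq hS _ | ne hS _ => simp [hS r, SLR.atoms]
  | @rel S s r' a hr hother =>
    by_cases h : r' = r
    · subst h
      simp [hr, SLR.atoms]
    · simp only [hother r (Ne.symm h), SLR.atoms, Set.mem_empty_iff_false, false_iff]
      rintro ⟨_, h', _⟩
      cases h'
      exact h rfl
  | pred => exact hq.elim
  | star _ _ _ ih₁ ih₂ =>
    simp only [Str.comp, Set.mem_union, ih₁ hq.1, ih₂ hq.2, SLR.atoms, or_and_right,
      exists_or]
  | ex => exact hq.elim

lemma Sat.eq_of_eqOccurs (hq : ψ.QPF) (hsat : Sat Δ S s ψ) {x y : ℕ}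
    (h : ψ.eqOccurs x y) : s x = s y := by
  induction hsat with
  | @eq S s a b _ hab => rcases h with ⟨rfl, rfl⟩ | ⟨rfl, rfl⟩ <;> simp [hab]
  | star _ _ _ ih₁ ih₂ => exact h.elim (ih₁ hq.1) (ih₂ hq.2)
  | pred => exact hq.elim
  | ex => exact hq.elim
  | _ => exact h.elim

lemma Sat.eq_of_reflTransGen (hq : ψ.QPF) (hsat : Sat Δ S s ψ) {x y : ℕ}
    (h : Relation.ReflTransGen ψ.eqOccurs x y) : s x = s y := by
  induction h with
  | refl => rfl
  | tail _ hyz ih => exact ih.trans (hsat.eq_of_eqOccurs hq hyz)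

open Classical in
def singletonStr (r : Rel) (t : Fin (ar r) → V) : Str Rel ar V where
  interp := Function.update (fun r' => ∅) r {t}
  finite_interp r' := by
    by_cases h : r' = r
    · subst h; simp
    · simp [h]
  finite_active := (Set.finite_singleton r).subset fun r' h => by
    by_contra h'
    exact h (Function.update_of_ne h' _ _)

lemma singletonStr_interp_self (r : Rel) (t : Fin (ar r) → V) :
    (singletonStr r t).interp r = {t} := by
  simp [singletonStr]

lemma singletonStr_interp_of_ne {r r' : Rel} (t : Fin (ar r) → V) (h : r' ≠ r) :
    (singletonStr r t).interp r' = ∅ := by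
  simp [singletonStr, h]

lemma Sat.remodel (hq : ψ.QPF) (hsat : Sat Δ S s ψ) {s' : ℕ → V}
    (heq : ∀ x y, ψ.eqOccurs x y → s' x = s' y) (hinj : ∀ x y, s' x = s' y → s x = s y) :
    ∃ S' : Str Rel ar V, Sat Δ S' s' ψ := by
  induction hsat with
  | emp hS => exact ⟨_, .emp hS⟩
  | @eq S s x y hS _ => exact ⟨_, .eq hS (heq x y (Or.inl ⟨rfl, rfl⟩))⟩
  | @ne S s x y hS hxy => exact ⟨_, .ne hS fun h => hxy (hinj x y h)⟩
  | @rel S s r a _ _ =>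
    exact ⟨_, .rel (singletonStr_interp_self _ _) fun r' h => singletonStr_interp_of_ne _ h⟩
  | pred => exact hq.elim
  | @star S₁ S₂ s φ₁ φ₂ hdisj hsat₁ hsat₂ ih₁ ih₂ =>
    obtain ⟨S₁', hsat₁'⟩ := ih₁ hq.1 (fun x y h => heq x y (Or.inl h)) hinj
    obtain ⟨S₂', hsat₂'⟩ := ih₂ hq.2 (fun x y h => heq x y (Or.inr h)) hinj
    refine ⟨_, .star (fun r => Set.eq_empty_of_forall_notMem fun t ⟨ht₁, ht₂⟩ => ?_)
      hsat₁' hsat₂'⟩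
    obtain ⟨a, ha, rfl⟩ := (hsat₁'.mem_interp_iff hq.1).mp ht₁
    obtain ⟨b, hb, hab⟩ := (hsat₂'.mem_interp_iff hq.2).mp ht₂
    -- the tuple of `a` under `s` would lie in both halves of the original model
    have hs : (fun i => s (a i)) = fun i => s (b i) :=
      funext fun i => hinj _ _ (congrFun hab i)
    have h₁ : (fun i => s (a i)) ∈ S₁.interp r :=
      (hsat₁.mem_interp_iff hq.1).mpr ⟨a, ha, rfl⟩
    have h₂ : (fun i => s (a i)) ∈ S₂.interp r :=
      (hsat₂.mem_interp_iff hq.2).mpr ⟨b, hb, hs⟩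
    exact (Set.eq_empty_iff_forall_notMem.mp (hdisj r)) _ ⟨h₁, h₂⟩
  | ex => exact hq.elim

end QPFSemantics

section EqualityAtoms

variable {Rel : Type} {ar : Rel → ℕ} {V : Type} {Pr : Type} {pa : Pr → ℕ}

lemma SLR.equivalence_reflTransGen_eqOccurs (ψ : SLR Rel ar Pr pa) :
    Equivalence (Relation.ReflTransGen ψ.eqOccurs) :=
  ⟨fun _ => .refl,
    fun h => by
      induction h with
      | refl => exact .refl
      | tail _ hzw ih => exact .head (SLR.eqOccurs_comm.mp hzw) ih,
    .trans⟩

/-- Were `x` and `y` not linked, the store sending each variable to (a code of) its class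
modulo the equality atoms would give a counter-model. -/
lemma EqConseq.reflTransGen_eqOccurs [Infinite V] {Δ : SID Rel ar Pr pa}
    {S : Str Rel ar V} {s : ℕ → V} {ψ : SLR Rel ar Pr pa} (hq : ψ.QPF) (hsat : Sat Δ S s ψ)
    {x y : ℕ} (h : EqConseq (V := V) Δ ψ x y) : Relation.ReflTransGen ψ.eqOccurs x y := by
  have hψ := ψ.equivalence_reflTransGen_eqOccurs
  set s' : ℕ → V := fun z =>
    Infinite.natEmbedding V (sInf {w | Relation.ReflTransGen ψ.eqOccurs z w})
  have hs' : ∀ z w, s' z = s' w ↔ Relation.ReflTransGen ψ.eqOccurs z w := fun z w =>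
    (Infinite.natEmbedding V).injective.eq_iff.trans hψ.sInf_setOf_eq_iff
  obtain ⟨S', hsat'⟩ := hsat.remodel hq (fun z w hzw => (hs' z w).mpr (.single hzw))
    fun z w hzw => hsat.eq_of_reflTransGen hq ((hs' z w).mp hzw)
  exact (hs' x y).mp (h S' s' hsat')

def SyntacticallyCanonical (s : ℕ → V) (ψ : SLR Rel ar Pr pa) : Prop :=
  ∀ x ∈ ψ.fv, ∀ y ∈ ψ.fv, s x = s y → Relation.ReflTransGen ψ.eqOccurs x y

lemma CanonicalStore.syntacticallyCanonical [Infinite V] {Δ : SID Rel ar Pr pa}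
    {S : Str Rel ar V} {s : ℕ → V} {ψ : SLR Rel ar Pr pa} (h : CanonicalStore Δ s ψ)
    (hq : ψ.QPF) (hsat : Sat Δ S s ψ) : SyntacticallyCanonical s ψ :=
  fun x hx y hy hxy => (h x hx y hy hxy).reflTransGen_eqOccurs hq hsat

end EqualityAtoms

section Unfolding

variable {Rel : Type} {ar : Rel → ℕ} {Pr : Type} {pa : Pr → ℕ}

def BoundedFv (K : ℕ) : SLR Rel ar Pr pa → Prop
  | .star φ ψ => (SLR.star φ ψ).fv.ncard ≤ K ∧ BoundedFv K φ ∧ BoundedFv K ψ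
  | .ex x φ => (SLR.ex x φ).fv.ncard ≤ K ∧ BoundedFv K φ
  | φ => φ.fv.ncard ≤ K

lemma BoundedFv.ncard_fv_le {K : ℕ} {φ : SLR Rel ar Pr pa} (h : BoundedFv K φ) :
    φ.fv.ncard ≤ K := by
  cases φ with
  | star | ex => exact h.1
  | _ => exact h

lemma boundedFv_of_vars_subset {K : ℕ} {X : Set ℕ} (hX : X.Finite) (hK : X.ncard ≤ K) :
    ∀ {φ : SLR Rel ar Pr pa}, φ.vars ⊆ X → BoundedFv K φ := by
  have hfv : ∀ {φ : SLR Rel ar Pr pa}, φ.vars ⊆ X → φ.fv.ncard ≤ K := fun h =>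
    (Set.ncard_le_ncard (SLR.fv_subset_vars _ |>.trans h) hX).trans hK
  intro φ h
  induction φ with
  | star φ ψ ih₁ ih₂ =>
    exact ⟨hfv h, ih₁ (Set.subset_union_left.trans h), ih₂ (Set.subset_union_right.trans h)⟩
  | ex x φ ih => exact ⟨hfv h, ih ((Set.subset_insert _ _).trans h)⟩
  | _ => exact hfv h

lemma IsSubst.fv_eq {f : ℕ → ℕ} {φ φ' : SLR Rel ar Pr pa} (h : IsSubst f φ φ') :
    φ'.fv = f '' φ.fv := by
  induction h with
  | emp => simp [SLR.fv]
  | eq | ne => simp [SLR.fv, Set.image_insert_eq]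
  | rel | pred => simp [SLR.fv, Set.range_comp]
  | star _ _ ih₁ ih₂ => simp [SLR.fv, ih₁, ih₂, Set.image_union]
  | @ex f x z φ φ' hfresh _ ih =>
    show φ'.fv \ {z} = f '' (φ.fv \ {x})
    ext a
    simp only [ih, Set.mem_sdiff, Set.mem_image, Set.mem_singleton_iff]
    constructor
    · rintro ⟨⟨y, hy, rfl⟩, hz⟩
      have hyx : y ≠ x := by rintro rfl; simp at hz
      exact ⟨y, ⟨hy, hyx⟩, by simp [Function.update_of_ne hyx]⟩
    · rintro ⟨y, ⟨hy, hyx⟩, rfl⟩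
      exact ⟨⟨y, hy, by simp [Function.update_of_ne hyx]⟩, hfresh y hy hyx⟩

lemma IsSubst.ncard_fv_le {f : ℕ → ℕ} {φ φ' : SLR Rel ar Pr pa} (h : IsSubst f φ φ') :
    φ'.fv.ncard ≤ φ.fv.ncard :=
  h.fv_eq ▸ Set.ncard_image_le φ.fv_finite

lemma IsSubst.boundedFv {K : ℕ} {f : ℕ → ℕ} {φ φ' : SLR Rel ar Pr pa}
    (h : IsSubst f φ φ') (hφ : BoundedFv K φ) : BoundedFv K φ' := by
  induction h with
  | star h₁ h₂ ih₁ ih₂ =>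
    exact ⟨(h₁.star h₂).ncard_fv_le.trans hφ.1, ih₁ hφ.2.1, ih₂ hφ.2.2⟩
  | ex hfresh h ih => exact ⟨(IsSubst.ex hfresh h).ncard_fv_le.trans hφ.1, ih hφ.2⟩
  | emp => exact hφ
  | eq | ne | rel | pred => exact (by constructor : IsSubst _ _ _).ncard_fv_le.trans hφ

variable {Δ : SID Rel ar Pr pa}

lemma Step.fv_subset {φ φ' : SLR Rel ar Pr pa} (h : Step Δ φ φ') : φ'.fv ⊆ φ.fv := by
  induction h with
  | @unfold A a body ψ hbody hsubst =>
    rw [hsubst.fv_eq]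
    rintro _ ⟨y, hy, rfl⟩
    have hy : y < pa A := Δ.wf A body hbody hy
    simp only [dif_pos hy]
    exact ⟨⟨y, hy⟩, rfl⟩
  | starL _ ih => exact Set.union_subset_union_left _ ih
  | starR _ ih => exact Set.union_subset_union_right _ ih
  | exC _ ih => exact Set.sdiff_subset_sdiff_left ih

lemma Unfolds.fv_subset {φ φ' : SLR Rel ar Pr pa} (h : Unfolds Δ φ φ') : φ'.fv ⊆ φ.fv := by
  induction h with
  | refl => exact subset_rfl
  | tail _ hstep ih => exact hstep.fv_subset.trans ih

lemma Step.boundedFv {K : ℕ} (hΔ : ∀ A, ∀ ρ ∈ Δ.rules A, BoundedFv K ρ)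
    {φ φ' : SLR Rel ar Pr pa} (h : Step Δ φ φ') (hφ : BoundedFv K φ) :
    BoundedFv K φ' := by
  have hle {φ φ' : SLR Rel ar Pr pa} (h : Step Δ φ φ') : φ'.fv.ncard ≤ φ.fv.ncard :=
    Set.ncard_le_ncard h.fv_subset φ.fv_finite
  induction h with
  | unfold hbody hsubst => exact hsubst.boundedFv (hΔ _ _ hbody)
  | starL h ih => exact ⟨(hle h.starL).trans hφ.1, ih hφ.2.1, hφ.2.2⟩
  | starR h ih => exact ⟨(hle h.starR).trans hφ.1, hφ.2.1, ih hφ.2.2⟩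
  | exC h ih => exact ⟨(hle h.exC).trans hφ.1, ih hφ.2⟩

lemma Unfolds.boundedFv {K : ℕ} (hΔ : ∀ A, ∀ ρ ∈ Δ.rules A, BoundedFv K ρ)
    {φ φ' : SLR Rel ar Pr pa} (h : Unfolds Δ φ φ') (hφ : BoundedFv K φ) :
    BoundedFv K φ' := by
  induction h with
  | refl => exact hφ
  | tail _ hstep ih => exact hstep.boundedFv hΔ ih

lemma SID.ncard_vars_le_maxvar {A : Pr} {ρ : SLR Rel ar Pr pa} (hρ : ρ ∈ Δ.rules A) :
    ({x | x < pa A} ∪ ρ.vars).ncard ≤ Δ.maxvar := by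
  refine le_csSup (Set.Finite.bddAbove ?_) ⟨A, ρ, hρ, rfl⟩
  refine (Δ.finite_rules.image fun p => ({x | x < pa p.1} ∪ p.2.vars).ncard).subset ?_
  rintro _ ⟨B, φ, hφ, rfl⟩
  exact ⟨(B, φ), hφ, rfl⟩

lemma SID.boundedFv_maxvar {A : Pr} {ρ : SLR Rel ar Pr pa} (hρ : ρ ∈ Δ.rules A) :
    BoundedFv Δ.maxvar ρ :=
  boundedFv_of_vars_subset ((Set.finite_lt_nat _).union ρ.vars_finite)
    (SID.ncard_vars_le_maxvar hρ) Set.subset_union_right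

lemma BoundedFv.of_subAt {K : ℕ} {φ ψ : SLR Rel ar Pr pa} {l : List Bool} (h : BoundedFv K φ)
    (hl : φ.subAt l = some ψ) : BoundedFv K ψ := by
  induction l generalizing φ with
  | nil => exact Option.some_inj.mp hl ▸ h
  | cons b l ih =>
    obtain ⟨φ', hc, hl⟩ := SLR.subAt_cons_eq_some.mp hl
    refine ih ?_ hl
    rcases SLR.child_eq_some.mp hc with ⟨_, -, rfl⟩ | ⟨_, -, rfl⟩ | ⟨_, -, rfl⟩
    · exact h.2.1
    · exact h.2.2
    · exact h.2

end Unfolding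

section Positions

variable {Rel : Type} {ar : Rel → ℕ} {Pr : Type} {pa : Pr → ℕ}

def Pos (χ : SLR Rel ar Pr pa) : Type := {l : List Bool // (χ.subAt l).isSome}

namespace Pos

variable {χ : SLR Rel ar Pr pa}

def sub (n : Pos χ) : SLR Rel ar Pr pa := (χ.subAt n.1).get n.2

lemma subAt_val (n : Pos χ) : χ.subAt n.1 = some n.sub := (Option.some_get n.2).symm

def ofSubAt {l : List Bool} {ψ : SLR Rel ar Pr pa} (h : χ.subAt l = some ψ) : Pos χ :=
  ⟨l, by simp [h]⟩

@[simp] lemma sub_ofSubAt {l : List Bool} {ψ : SLR Rel ar Pr pa} (h : χ.subAt l = some ψ) :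
    (ofSubAt h).sub = ψ :=
  Option.some_inj.mp ((ofSubAt h).subAt_val.symm.trans h)

lemma sub_of_val_eq_nil {n : Pos χ} (h : n.1 = []) : n.sub = χ :=
  Option.some_inj.mp (n.subAt_val.symm.trans (h ▸ rfl))

instance : Nonempty (Pos χ) := ⟨⟨[], rfl⟩⟩

instance : Finite (Pos χ) := by
  refine ((List.finite_length_le Bool χ.depth).subset ?_).to_subtype
  intro l hl
  obtain ⟨ψ, hψ⟩ := Option.isSome_iff_exists.mp hl
  exact SLR.length_le_depth_of_subAt hψ

def par (n : Pos χ) : Pos χ :=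
  ⟨n.1.dropLast, by
    obtain ⟨t, ht⟩ := List.dropLast_prefix n.1
    have h := n.2
    rw [← ht, SLR.subAt_append] at h
    exact Option.isSome_of_isSome_bind h⟩

lemma par_eq_self_iff {n : Pos χ} : n.par = n ↔ n.1 = [] := by
  refine ⟨fun h => List.eq_nil_of_length_eq_zero ?_, fun h => Subtype.ext (by simp [par, h])⟩
  have := congrArg (fun m : Pos χ => m.1.length) h
  simp only [par, List.length_dropLast] at this
  omega

lemma length_par_lt {n : Pos χ} (h : n.par ≠ n) : n.par.1.length < n.1.length := by
  have := List.length_pos_iff.mpr (mt par_eq_self_iff.mpr h)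
  simp only [par, List.length_dropLast]
  omega

lemma exists_child_par {n : Pos χ} (h : n.par ≠ n) :
    ∃ b, n.1 = n.par.1 ++ [b] ∧ SLR.child b n.par.sub = some n.sub := by
  have hval : n.1 = n.par.1 ++ [_] :=
    (List.dropLast_append_getLast (mt par_eq_self_iff.mpr h)).symm
  refine ⟨_, hval, ?_⟩
  have hsub := n.subAt_val
  rwa [hval, SLR.subAt_concat, n.par.subAt_val, Option.bind_some] at hsub

end Pos

def posGraph (χ : SLR Rel ar Pr pa) : SimpleGraph (Pos χ) := SimpleGraph.parentGraph Pos.par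

lemma posGraph_isTree (χ : SLR Rel ar Pr pa) : (posGraph χ).IsTree :=
  SimpleGraph.parentGraph_isTree (rk := fun n : Pos χ => n.1.length)
    (fun _ h => Pos.length_par_lt h) fun _ _ ha hb =>
      Subtype.ext ((Pos.par_eq_self_iff.mp ha).trans (Pos.par_eq_self_iff.mp hb).symm)

def fvPositions (χ : SLR Rel ar Pr pa) (x : ℕ) : Set (Pos χ) := {n | x ∈ n.sub.fv}

variable {χ : SLR Rel ar Pr pa}

lemma Pos.par_sub_eq_ex (hfv : χ.fv = ∅) {x : ℕ} {n : Pos χ} (hn : n ∈ fvPositions χ x)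
    (hexit : n.par ∉ fvPositions χ x ∨ n.par = n) :
    n.par.sub = .ex x n.sub ∧ n.1 = n.par.1 ++ [false] := by
  have hne : n.par ≠ n := by
    intro h
    have : x ∈ χ.fv := Pos.sub_of_val_eq_nil (Pos.par_eq_self_iff.mp h) ▸ hn
    rwa [hfv] at this
  obtain ⟨b, hb, hchild⟩ := Pos.exists_child_par hne
  rcases SLR.fv_of_child hchild hn with h | h
  · exact absurd h (hexit.resolve_right hne)
  · rw [h] at hchild
    cases b
    · exact ⟨h, hb⟩
    · simp [SLR.child] at hchild

lemma fvPositions_connected (hfv : χ.fv = ∅) (hnd : χ.binders.Nodup) {x : ℕ}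
    (hne : (fvPositions χ x).Nonempty) : ((posGraph χ).induce (fvPositions χ x)).Connected := by
  refine SimpleGraph.parentGraph_induce_connected (rk := fun n : Pos χ => n.1.length)
    (fun _ h => Pos.length_par_lt h) hne fun a ha b hb hexa hexb => Subtype.ext ?_
  obtain ⟨hpa, hva⟩ := Pos.par_sub_eq_ex hfv ha hexa
  obtain ⟨hpb, hvb⟩ := Pos.par_sub_eq_ex hfv hb hexb
  have := SLR.subAt_ex_unique hnd (hpa ▸ a.par.subAt_val) (hpb ▸ b.par.subAt_val)
  rw [hva, hvb, this]

end Positions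

section Decomposition

variable {Rel : Type} {ar : Rel → ℕ} {V : Type} {Pr : Type} {pa : Pr → ℕ}
  {Δ : SID Rel ar Pr pa} {χ : SLR Rel ar Pr pa} {S : Str Rel ar V} {s : ℕ → V}

lemma exists_pos_of_mem_interp (hpf : χ.PredFree) (hsat : Sat Δ S s χ.matrix) {r : Rel}
    {t : Fin (ar r) → V} (ht : t ∈ S.interp r) :
    ∃ (n : Pos χ) (a : Fin (ar r) → ℕ), n.sub = .rel r a ∧ t = fun i => s (a i) := by
  obtain ⟨a, ha, rfl⟩ := (hsat.mem_interp_iff hpf.matrix_qpf).mp ht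
  obtain ⟨l, hl⟩ := SLR.exists_subAt_of_mem_atoms (χ.atoms_matrix ▸ ha)
  exact ⟨Pos.ofSubAt hl, a, Pos.sub_ofSubAt hl, rfl⟩

lemma exists_pos_of_eqOccurs {x y : ℕ} (h : χ.matrix.eqOccurs x y) :
    ∃ n : Pos χ, x ∈ n.sub.fv ∧ y ∈ n.sub.fv := by
  rcases SLR.eq_mem_atoms_of_eqOccurs h with h | h <;>
    obtain ⟨l, hl⟩ := SLR.exists_subAt_of_mem_atoms (χ.atoms_matrix ▸ h) <;>
    exact ⟨Pos.ofSubAt hl, by simp [SLR.fv]⟩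

lemma posGraph_induce_mem_bag_connected (hfv : χ.fv = ∅) (hnd : χ.binders.Nodup) (hpf : χ.PredFree)
    (hsat : Sat Δ S s χ.matrix)
    (hs : SyntacticallyCanonical s χ.matrix)
    {u : V} (hu : u ∈ S.supp) :
    ((posGraph χ).induce {n | u ∈ s '' n.sub.fv}).Connected := by
  set P := {n : Pos χ | u ∈ s '' n.sub.fv}
  have hfvP : ∀ y, s y = u → fvPositions χ y ⊆ P := fun y hy n hn => ⟨y, hn, hy⟩
  have hmat : ∀ {n : Pos χ} {y}, y ∈ n.sub.fv → y ∈ χ.matrix.fv := fun hy =>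
    SLR.fv_subset_fv_matrix_of_subAt (Pos.subAt_val _) hy
  obtain ⟨r, t, ht, i, rfl⟩ := hu
  obtain ⟨n₀, a, hn₀, rfl⟩ := exists_pos_of_mem_interp hpf hsat ht
  have hx₀ : n₀ ∈ fvPositions χ (a i) := by simp [fvPositions, hn₀, SLR.fv]
  have hreach : ∀ y (hy : Relation.ReflTransGen χ.matrix.eqOccurs (a i) y),
      ∀ n (hn : n ∈ fvPositions χ y), ((posGraph χ).induce P).Reachable
        ⟨n₀, hfvP _ rfl hx₀⟩
        ⟨n, hfvP y (hsat.eq_of_reflTransGen hpf.matrix_qpf hy).symm hn⟩ := by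
    intro y hy
    induction hy with
    | refl =>
      exact fun n hn => SimpleGraph.induce_reachable_of_subset
        (fvPositions_connected hfv hnd ⟨n₀, hx₀⟩).preconnected (hfvP _ rfl) hx₀ hn
    | @tail b c hb hbc ih =>
      intro n hn
      obtain ⟨m, hbm, hcm⟩ := exists_pos_of_eqOccurs hbc
      exact (ih m hbm).trans (SimpleGraph.induce_reachable_of_subset
        (fvPositions_connected hfv hnd ⟨m, hcm⟩).preconnected
        (hfvP c (hsat.eq_of_reflTransGen hpf.matrix_qpf (hb.tail hbc)).symm) hcm hn)
  rw [SimpleGraph.connected_iff_exists_forall_reachable]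
  refine ⟨⟨n₀, hfvP _ rfl hx₀⟩, fun ⟨n, y, hy, hsy⟩ => ?_⟩
  exact hreach y (hs _ (hmat (hx₀ : a i ∈ n₀.sub.fv)) y (hmat hy) hsy.symm) n hy

lemma tw_le_width (T : TreeDecomp S) : tw S ≤ T.width := Nat.sInf_le ⟨T, rfl⟩

noncomputable def posDecomp (hfv : χ.fv = ∅) (hnd : χ.binders.Nodup) (hpf : χ.PredFree)
    (hsat : Sat Δ S s χ.matrix)
    (hs : SyntacticallyCanonical s χ.matrix) : TreeDecomp S where
  ι := Pos χ
  instFin := Fintype.ofFinite _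
  G := posGraph χ
  isTree := posGraph_isTree χ
  bag n := (n.sub.fv_finite.image s).toFinset
  bag_cover r t ht := by
    obtain ⟨n, a, hn, rfl⟩ := exists_pos_of_mem_interp hpf hsat ht
    exact ⟨n, fun i => by simp [hn, SLR.fv]⟩
  bag_conn u hu := by
    have hP : {n : Pos χ | u ∈ (n.sub.fv_finite.image s).toFinset} = {n | u ∈ s '' n.sub.fv} :=
      Set.ext fun n => Set.Finite.mem_toFinset _
    exact hP ▸ posGraph_induce_mem_bag_connected hfv hnd hpf hsat hs hu

theorem tw_le_of_sat_matrix {K : ℕ} (hfv : χ.fv = ∅) (hnd : χ.binders.Nodup)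
    (hpf : χ.PredFree) (hsat : Sat Δ S s χ.matrix)
    (hs : SyntacticallyCanonical s χ.matrix)
    (hK : BoundedFv K χ) : tw S ≤ K - 1 := by
  refine (tw_le_width (posDecomp hfv hnd hpf hsat hs)).trans ?_
  refine Nat.sub_le_sub_right (Finset.sup_le fun n _ => ?_) 1
  calc (n.sub.fv_finite.image s).toFinset.card = (s '' n.sub.fv).ncard :=
        (Set.ncard_eq_toFinset_card _ _).symm
    _ ≤ n.sub.fv.ncard := Set.ncard_image_le n.sub.fv_finite
    _ ≤ K := (hK.of_subAt n.subAt_val).ncard_fv_le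

end Decomposition

theorem canonical_treewidth_bound_general
    (Rel : Type) (ar : Rel → ℕ)
    (V : Type) [Infinite V] (Pr : Type) (pa : Pr → ℕ)
    (Δ : SID Rel ar Pr pa) (A : Pr) (hA : pa A = 0) :
    ∀ S ∈ Canonical (V := V) Δ (natom A), tw S ≤ Δ.maxvar - 1 := by
  rintro S ⟨-, χ, hunf, hpf, hwn, s, hcan, hsat, -⟩
  have hfvA : SLR.fv (natom A : SLR Rel ar Pr pa) = ∅ := by
    have : IsEmpty (Fin (pa A)) := hA ▸ inferInstance
    exact Set.range_eq_empty _
  have hfv : χ.fv = ∅ := Set.subset_empty_iff.mp (hfvA ▸ hunf.fv_subset)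
  have hK : BoundedFv Δ.maxvar χ :=
    hunf.boundedFv (fun _ _ => SID.boundedFv_maxvar)
      (show (natom A).fv.ncard ≤ Δ.maxvar by simp [hfvA])
  exact tw_le_of_sat_matrix hfv hwn.1 hpf hsat
    (hcan.syntacticallyCanonical hpf.matrix_qpf hsat) hK

/-- Lemma 3.4: every canonical `Δ`-model of a nullary predicate has
treewidth at most `maxvar(Δ) - 1`. -/
theorem canonical_treewidth_bound
    (Rel : Type) [Fintype Rel] (ar : Rel → ℕ) (har : ∀ r, 1 ≤ ar r)
    (V : Type) [Infinite V] (Pr : Type) (pa : Pr → ℕ)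
    (Δ : SID Rel ar Pr pa) (A : Pr) (hA : pa A = 0) :
    ∀ S ∈ Canonical (V := V) Δ (natom A), tw S ≤ Δ.maxvar - 1 :=
  canonical_treewidth_bound_general Rel ar V Pr pa Δ A hA

end SLRTW
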